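/- Fix indices p, q, r, s in {1, …, N} with p − 1 > q, q − 1 > r, and r − 1 > s, and consider the 16 N-qubit Pauli strings obtained as follows (the Parity-encoding strings of a double-excitation operator a†_p a†_q a_r a_s): for each of the four index pairs (p, p−1), (q, q−1), (r, r−1), (s, s−1), choose the block to be either (X at the first index and Z at the second) or (Y at the first index and I at the second); place X at every position strictly between q+1−1 and p−1 (i.e., positions p−2 down to q+1) and at every position strictly between s and r−1 (i.e., positions r−2 down to s+1); and place I at all remaining positions. Then two such strings commute if and only if their block choices differ at an even number of the four blocks, and the minimum number of parts in a partition of these 16 strings into pairwise-commuting families is exactly 2, achieved by partitioning according to the parity of the number of Y-blocks. -/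

import Mathlib

/-!
Single-qubit Pauli matrices either commute or anticommute, so by the multiplicativity of the
Kronecker product two Pauli strings commute iff they anticommute at an even number of sites.
Two Parity-encoding strings agree away from the block sites; at the second site of a block they
carry `I` or `Z`, which commute, and at the first site `X` or `Y`, which anticommute exactly
when the block choices differ. The number of differing blocks has the parity of the sum of
the two `Y`-counts, so each `Y`-parity class is a commuting family, while the all-`X` string
anticommutes with any string having a single `Y` block, so one family never suffices.
-/

open Matrix Finset

inductive Pauli : Type
  | I | X | Y | Z
  deriving DecidableEq

instance : Fintype Pauli where
  elems := {Pauli.I, Pauli.X, Pauli.Y, Pauli.Z}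
  complete := fun x => by cases x <;> simp

noncomputable def Pauli.mat : Pauli → Matrix (Fin 2) (Fin 2) ℂ
  | .I => 1
  | .X => !![0, 1; 1, 0]
  | .Y => !![0, -Complex.I; Complex.I, 0]
  | .Z => !![1, 0; 0, -1]

/-- An `N`-qubit Pauli string: a function from qubit indices to single-qubit Paulis. -/
abbrev PauliString (N : ℕ) := Fin N → Pauli

/-- The `2^N × 2^N` matrix of a Pauli string, as the tensor (Kronecker) product of its
entries, with rows/columns indexed by `Fin N → Fin 2`. -/
noncomputable def Pmat {N : ℕ} (A : PauliString N) :
    Matrix (Fin N → Fin 2) (Fin N → Fin 2) ℂ :=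
  Matrix.of fun x y => ∏ j, (A j).mat (x j) (y j)

/-- The Parity-encoding Pauli string of a double excitation operator `a†_p a†_q a_r a_s`
(with `p - 1 > q`, `q - 1 > r`, `r - 1 > s ≥ 1`), determined by a block choice
`b : Fin 4 → Bool` at each of the four index pairs `(p, p-1), (q, q-1), (r, r-1), (s, s-1)`:
`false` places `X` at the first index and `Z` at the second, `true` places `Y` at the first
index and `I` at the second. `X` is placed at positions `p-2` down to `q+1` and positions
`r-2` down to `s+1`, and `I` at all remaining positions. -/
def parityString (N p q r s : ℕ) (b : Fin 4 → Bool) : PauliString N := fun j =>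
  if j.val = p then (if b 0 then Pauli.Y else Pauli.X)
  else if j.val = p - 1 then (if b 0 then Pauli.I else Pauli.Z)
  else if j.val = q then (if b 1 then Pauli.Y else Pauli.X)
  else if j.val = q - 1 then (if b 1 then Pauli.I else Pauli.Z)
  else if j.val = r then (if b 2 then Pauli.Y else Pauli.X)
  else if j.val = r - 1 then (if b 2 then Pauli.I else Pauli.Z)
  else if j.val = s then (if b 3 then Pauli.Y else Pauli.X)
  else if j.val = s - 1 then (if b 3 then Pauli.I else Pauli.Z)
  else if (q + 1 ≤ j.val ∧ j.val + 2 ≤ p) ∨ (s + 1 ≤ j.val ∧ j.val + 2 ≤ r) then Pauli.X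
  else Pauli.I

/-- Number of `Y`-blocks in a block choice `b : Fin 4 → Bool`. -/
def yCount (b : Fin 4 → Bool) : ℕ := (Finset.univ.filter fun i => b i = true).card

/-- `P` is a partition of the finite set `T` of Pauli strings into families of pairwise
commuting strings. -/
def IsCommPartition {N : ℕ} (T : Finset (PauliString N))
    (P : Finset (Finset (PauliString N))) : Prop :=
  (∀ S ∈ P, S.Nonempty) ∧
  (P : Set (Finset (PauliString N))).PairwiseDisjoint id ∧
  P.sup id = T ∧
  ∀ S ∈ P, ∀ A ∈ S, ∀ B ∈ S, Pmat A * Pmat B = Pmat B * Pmat A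

namespace Matrix

variable {ι n R : Type*} [Fintype ι]

def kroneckerPi [CommMonoid R] (M : ι → Matrix n n R) : Matrix (ι → n) (ι → n) R :=
  of fun x y => ∏ j, M j (x j) (y j)

theorem kroneckerPi_mul_kroneckerPi [DecidableEq ι] [Fintype n] [CommSemiring R]
    (M M' : ι → Matrix n n R) : kroneckerPi M * kroneckerPi M' = kroneckerPi (M * M') := by
  ext x y
  simp only [kroneckerPi, mul_apply, of_apply, Pi.mul_apply, ← prod_mul_distrib]
  rw [prod_univ_sum (fun _ => univ) fun j k => M j (x j) k * M' j k (y j),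
    Fintype.piFinset_univ]

theorem kroneckerPi_smul [CommMonoid R] (c : ι → R) (M : ι → Matrix n n R) :
    kroneckerPi (fun j => c j • M j) = (∏ j, c j) • kroneckerPi M := by
  ext x y
  simp [kroneckerPi, prod_mul_distrib]

theorem kroneckerPi_ne_zero [CommMonoidWithZero R] [NoZeroDivisors R] [Nontrivial R]
    {M : ι → Matrix n n R} (hM : ∀ j, M j ≠ 0) : kroneckerPi M ≠ 0 := by
  have : ∀ j, ∃ xy : n × n, M j xy.1 xy.2 ≠ 0 := fun j => by
    simpa [← Matrix.ext_iff, not_forall] using hM j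
  choose xy hxy using this
  refine ne_of_apply_ne (fun A => A (fun j => (xy j).1) (fun j => (xy j).2)) ?_
  simpa only [kroneckerPi, of_apply, zero_apply, ne_eq, prod_eq_zero_iff, mem_univ, true_and,
    not_exists] using hxy

end Matrix

namespace Pauli

def Commutes (a b : Pauli) : Prop := a = I ∨ b = I ∨ a = b

instance : DecidableRel Commutes := fun a b => inferInstanceAs (Decidable (a = I ∨ b = I ∨ a = b))

theorem Commutes.refl (a : Pauli) : Commutes a a := Or.inr (Or.inr rfl)

theorem commutes_ite_Y_X_iff (c c' : Bool) :
    Commutes (if c then Y else X) (if c' then Y else X) ↔ c = c' := by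
  cases c <;> cases c' <;> decide

theorem commutes_ite_I_Z (c c' : Bool) : Commutes (if c then I else Z) (if c' then I else Z) := by
  cases c <;> cases c' <;> decide

theorem mat_mul_self (a : Pauli) : a.mat * a.mat = 1 := by
  cases a <;> ext i j <;> fin_cases i <;> fin_cases j <;> simp [mat, mul_apply, Fin.sum_univ_two]

theorem mat_mul_eq_sign_smul (a b : Pauli) :
    a.mat * b.mat = (if Commutes a b then 1 else -1 : ℂ) • (b.mat * a.mat) := by
  cases a <;> cases b <;> ext i j <;> fin_cases i <;> fin_cases j <;>
    simp [mat, Commutes, mul_apply, Fin.sum_univ_two]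

theorem mat_mul_ne_zero (a b : Pauli) : a.mat * b.mat ≠ 0 := by
  intro h
  have : a.mat * b.mat * (b.mat * a.mat) = 1 := by
    rw [mul_assoc, ← mul_assoc b.mat, mat_mul_self, one_mul, mat_mul_self]
  simp [h] at this

end Pauli

section PauliString

variable {N : ℕ}

def anticommutingSites (A B : PauliString N) : Finset (Fin N) :=
  {j | ¬ (A j).Commutes (B j)}

theorem anticommutingSites_self (A : PauliString N) : anticommutingSites A A = ∅ := by
  simp [anticommutingSites, Pauli.Commutes.refl]

theorem Pmat_eq_kroneckerPi (A : PauliString N) : Pmat A = kroneckerPi fun j => (A j).mat := rfl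

theorem Pmat_mul_Pmat_ne_zero (A B : PauliString N) : Pmat A * Pmat B ≠ 0 := by
  rw [Pmat_eq_kroneckerPi, Pmat_eq_kroneckerPi, kroneckerPi_mul_kroneckerPi]
  exact kroneckerPi_ne_zero fun j => Pauli.mat_mul_ne_zero _ _

theorem Pmat_mul_Pmat_eq_neg_one_pow_smul (A B : PauliString N) :
    Pmat A * Pmat B = (-1 : ℂ) ^ #(anticommutingSites A B) • (Pmat B * Pmat A) := by
  simp only [Pmat_eq_kroneckerPi, kroneckerPi_mul_kroneckerPi, Pi.mul_def,
    Pauli.mat_mul_eq_sign_smul (A _), kroneckerPi_smul, prod_ite, prod_const_one, one_mul,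
    prod_const, anticommutingSites]

theorem Pmat_commute_iff (A B : PauliString N) :
    Pmat A * Pmat B = Pmat B * Pmat A ↔ Even #(anticommutingSites A B) := by
  rw [Pmat_mul_Pmat_eq_neg_one_pow_smul]
  rcases (#(anticommutingSites A B)).even_or_odd with h | h
  · simp [h.neg_one_pow, h]
  · rw [h.neg_one_pow, neg_one_smul, iff_false_intro (Nat.not_even_iff_odd.mpr h),
      iff_false]
    exact neg_eq_self (G := (Fin N → Fin 2) → _ → ℂ) |>.not.mpr (Pmat_mul_Pmat_ne_zero B A)

end PauliString

section ParityString

variable {N p q r s : ℕ}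

theorem mem_anticommutingSites_parityString (hsr : s + 1 < r) (hrq : r + 1 < q)
    (hqp : q + 1 < p) (b b' : Fin 4 → Bool) (j : Fin N) :
    j ∈ anticommutingSites (parityString N p q r s b) (parityString N p q r s b') ↔
      ∃ i, b i ≠ b' i ∧ j.val = ![p, q, r, s] i := by
  simp only [anticommutingSites, mem_filter, mem_univ, true_and, parityString,
    apply_ite₂ Pauli.Commutes, Pauli.commutes_ite_Y_X_iff, Pauli.commutes_ite_I_Z,
    Pauli.Commutes.refl, Fin.exists_fin_succ, Fin.exists_fin_zero, Matrix.cons_val_zero,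
    Matrix.cons_val_succ]
  -- both strings take the same branch of the position test, so only the block sites remain
  split_ifs <;> grind

theorem card_anticommutingSites_parityString (hsr : s + 1 < r) (hrq : r + 1 < q)
    (hqp : q + 1 < p) (hpN : p < N) (b b' : Fin 4 → Bool) :
    #(anticommutingSites (parityString N p q r s b) (parityString N p q r s b')) =
      #{i | b i ≠ b' i} := by
  have hsite : ∀ i, ![p, q, r, s] i < N := by
    intro i; fin_cases i <;> simp <;> omega
  symm
  refine card_bij (fun i _ => ⟨![p, q, r, s] i, hsite i⟩) (fun i hi => ?_) (fun i _ i' _ h => ?_)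
    (fun j hj => ?_)
  · rw [mem_anticommutingSites_parityString hsr hrq hqp]
    exact ⟨i, (mem_filter.mp hi).2, rfl⟩
  · rw [Fin.mk.injEq] at h
    fin_cases i <;> fin_cases i' <;> simp at h ⊢ <;> omega
  · obtain ⟨i, hi, hj⟩ := (mem_anticommutingSites_parityString hsr hrq hqp b b' j).mp hj
    exact ⟨i, mem_filter.mpr ⟨mem_univ i, hi⟩, Fin.ext hj.symm⟩

theorem parityString_injective (hsr : s + 1 < r) (hrq : r + 1 < q) (hqp : q + 1 < p)
    (hpN : p < N) : Function.Injective (parityString N p q r s) := by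
  intro b b' h
  have hcard := card_anticommutingSites_parityString hsr hrq hqp hpN b b'
  rw [h, anticommutingSites_self, card_empty, eq_comm, card_eq_zero, filter_eq_empty_iff] at hcard
  funext i
  simpa using hcard (mem_univ i)

theorem Pmat_parityString_commute_iff (hsr : s + 1 < r) (hrq : r + 1 < q) (hqp : q + 1 < p)
    (hpN : p < N) (b b' : Fin 4 → Bool) :
    Pmat (parityString N p q r s b) * Pmat (parityString N p q r s b') =
        Pmat (parityString N p q r s b') * Pmat (parityString N p q r s b) ↔
      Even (Nat.card {i : Fin 4 // b i ≠ b' i}) := by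
  rw [Pmat_commute_iff, card_anticommutingSites_parityString hsr hrq hqp hpN,
    Nat.card_eq_fintype_card, Fintype.card_subtype]

end ParityString

theorem even_card_ne_iff {ι : Type*} [Fintype ι] (b b' : ι → Bool) :
    Even #{i | b i ≠ b' i} ↔ (Even #{i | b i = true} ↔ Even #{i | b' i = true}) := by
  have : #{i | b i ≠ b' i} + 2 * #{i | b i = true ∧ b' i = true} =
      #{i | b i = true} + #{i | b' i = true} := by
    simp only [card_filter, mul_sum, ← sum_add_distrib]
    refine sum_congr rfl fun i _ => ?_
    cases b i <;> cases b' i <;> rfl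
  rw [← Nat.even_add, ← this, Nat.even_add, iff_true_right (even_two_mul _)]

section CommPartition

variable {N : ℕ}

theorem IsCommPartition.two_le_card {T : Finset (PauliString N)}
    {P : Finset (Finset (PauliString N))} (hP : IsCommPartition T P) {A B : PauliString N}
    (hA : A ∈ T) (hB : B ∈ T) (hAB : Pmat A * Pmat B ≠ Pmat B * Pmat A) : 2 ≤ #P := by
  obtain ⟨-, -, hsup, hcomm⟩ := hP
  rw [← hsup] at hA hB
  obtain ⟨S, hS, hAS⟩ := mem_sup.mp hA
  obtain ⟨S', hS', hBS'⟩ := mem_sup.mp hB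
  refine one_lt_card.mpr ⟨S, hS, S', hS', fun hSS' => hAB ?_⟩
  exact hcomm S hS A hAS B (hSS' ▸ hBS')

theorem isCommPartition_pair_image_filter {α : Type*} [Fintype α] {f : α → PauliString N}
    (hf : Function.Injective f) (Q : α → Prop) [DecidablePred Q]
    (hQ : ∀ a a', (Q a ↔ Q a') → Pmat (f a) * Pmat (f a') = Pmat (f a') * Pmat (f a))
    (hpos : ∃ a, Q a) (hneg : ∃ a, ¬ Q a) :
    IsCommPartition (univ.image f) {(univ.filter Q).image f, (univ.filter (¬ Q ·)).image f} := by
  have hdisj : Disjoint ((univ.filter Q).image f) ((univ.filter (¬ Q ·)).image f) :=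
    (disjoint_image hf).mpr (disjoint_filter_filter_not _ _ _)
  have hclass : ∀ (R : α → Prop) [DecidablePred R], (∀ a a', R a → R a' → (Q a ↔ Q a')) →
      ∀ A ∈ (univ.filter R).image f, ∀ B ∈ (univ.filter R).image f,
        Pmat A * Pmat B = Pmat B * Pmat A := by
    intro R _ hR A hA B hB
    obtain ⟨a, ha, rfl⟩ := mem_image.mp hA
    obtain ⟨a', ha', rfl⟩ := mem_image.mp hB
    exact hQ a a' (hR a a' (mem_filter.mp ha).2 (mem_filter.mp ha').2)
  obtain ⟨a, ha⟩ := hpos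
  obtain ⟨a', ha'⟩ := hneg
  refine ⟨?_, ?_, ?_, ?_⟩
  · simp only [mem_insert, mem_singleton]
    rintro S (rfl | rfl)
    exacts [⟨f a, mem_image_of_mem f (by simpa using ha)⟩,
      ⟨f a', mem_image_of_mem f (by simpa using ha')⟩]
  · rw [coe_pair]
    exact Set.pairwise_pair.mpr fun _ => ⟨hdisj, hdisj.symm⟩
  · classical
    rw [sup_insert, sup_singleton, id, id, sup_eq_union, ← image_union,
      filter_union_filter_not_eq]
  · simp only [mem_insert, mem_singleton]
    rintro S (rfl | rfl)
    exacts [hclass Q fun _ _ h h' => iff_of_true h h',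
      hclass (¬ Q ·) fun _ _ h h' => iff_of_false h h']

end CommPartition

theorem parity_commute_iff_and_min_partition_general {N p q r s : ℕ}
    (hsr : s + 1 < r) (hrq : r + 1 < q) (hqp : q + 1 < p) (hpN : p < N) :
    (∀ b b' : Fin 4 → Bool,
      Pmat (parityString N p q r s b) * Pmat (parityString N p q r s b') =
        Pmat (parityString N p q r s b') * Pmat (parityString N p q r s b) ↔
      Even (Nat.card {i : Fin 4 // b i ≠ b' i})) ∧
    IsLeast {k | ∃ P, IsCommPartition (Finset.univ.image (parityString N p q r s)) P ∧
        P.card = k} 2 ∧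
    IsCommPartition (Finset.univ.image (parityString N p q r s))
      {(Finset.univ.filter fun b => Even (yCount b)).image (parityString N p q r s),
       (Finset.univ.filter fun b => ¬ Even (yCount b)).image (parityString N p q r s)} := by
  have hcomm := Pmat_parityString_commute_iff hsr hrq hqp hpN
  have hsplit := isCommPartition_pair_image_filter (parityString_injective hsr hrq hqp hpN)
    (fun b => Even (yCount b))
    (fun b b' h => (hcomm b b').mpr <| by
      rwa [Nat.card_eq_fintype_card, Fintype.card_subtype, even_card_ne_iff])
    ⟨fun _ => false, by decide⟩ ⟨![true, false, false, false], by decide⟩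
  have hanti : Pmat (parityString N p q r s fun _ => false) *
        Pmat (parityString N p q r s ![true, false, false, false]) ≠
      Pmat (parityString N p q r s ![true, false, false, false]) *
        Pmat (parityString N p q r s fun _ => false) := by
    rw [Ne, hcomm, Nat.card_eq_fintype_card]
    decide
  have two_le : ∀ P, IsCommPartition (univ.image (parityString N p q r s)) P → 2 ≤ #P :=
    fun P hP => hP.two_le_card (mem_image_of_mem _ (mem_univ _))
      (mem_image_of_mem _ (mem_univ _)) hanti
  exact ⟨hcomm, ⟨⟨_, hsplit, le_antisymm card_le_two (two_le _ hsplit)⟩,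
    fun _ ⟨P, hP, hk⟩ => hk ▸ two_le P hP⟩, hsplit⟩

/-- Two Parity-encoding strings of `a†_p a†_q a_r a_s` commute iff their block choices
differ at an even number of the four blocks; and the minimum number of parts in a
partition of these 16 strings into pairwise-commuting families is exactly 2, achieved by
partitioning according to the parity of the number of `Y`-blocks. -/
theorem parity_commute_iff_and_min_partition {N p q r s : ℕ}
    (hs : 1 ≤ s) (hsr : s + 1 < r) (hrq : r + 1 < q) (hqp : q + 1 < p) (hpN : p < N) :
    (∀ b b' : Fin 4 → Bool,
      Pmat (parityString N p q r s b) * Pmat (parityString N p q r s b') =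
        Pmat (parityString N p q r s b') * Pmat (parityString N p q r s b) ↔
      Even (Nat.card {i : Fin 4 // b i ≠ b' i})) ∧
    IsLeast {k | ∃ P, IsCommPartition (Finset.univ.image (parityString N p q r s)) P ∧
        P.card = k} 2 ∧
    IsCommPartition (Finset.univ.image (parityString N p q r s))
      {(Finset.univ.filter fun b => Even (yCount b)).image (parityString N p q r s),
       (Finset.univ.filter fun b => ¬ Even (yCount b)).image (parityString N p q r s)} :=
  parity_commute_iff_and_min_partition_general hsr hrq hqp hpN
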